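/- Blockwise subspace approximation bound: let n, m, r be positive integers, and for each j ∈ Fin n let κⱼ : Fin m → ℝ be positive, Kⱼ the diagonal matrix with entries κⱼ, and T₁ⱼ, T₂ⱼ be κⱼ-orthonormal m×r matrices. Let v : Fin n → ℝ^m be such that each block vⱼ lies in the column span of T₂ⱼ and the global weighted norm satisfies Σⱼ vⱼᵀ Kⱼ vⱼ ≤ 1. Then, with the blockwise κⱼ-orthogonal projections wⱼ = T₁ⱼ T₁ⱼᵀ Kⱼ vⱼ, one has Σⱼ (vⱼ − wⱼ)ᵀ Kⱼ (vⱼ − wⱼ) ≤ max over j of (r − ‖T₁ⱼᵀ Kⱼ T₂ⱼ‖_F²). -/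

import Mathlib

open Matrix

/-- Frobenius norm of a real matrix. -/
noncomputable def frobNorm {α β : Type*} [Fintype α] [Fintype β] (M : Matrix α β ℝ) : ℝ :=
  Real.sqrt (∑ i, ∑ j, (M i j) ^ 2)

/-- Subspace distance between two κ-orthonormal bases. -/
noncomputable def distK {m r : ℕ} (κ : Fin m → ℝ) (T₁ T₂ : Matrix (Fin m) (Fin r) ℝ) : ℝ :=
  Real.sqrt ((r : ℝ) - (frobNorm (T₁ᵀ * Matrix.diagonal κ * T₂)) ^ 2)

/-!
Write `K` for the weight matrix of a block, `M = T₁ᵀ K T₂` and `B = T₂ - T₁ M`. If `v = T₂ c`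
then `v - w = B c`, and since `T₁ T₁ᵀ K` is the `K`-orthogonal projection onto the span of `T₁`,
`Bᵀ K B = 1 - Mᵀ M`, whose trace is `r - ‖M‖_F²`. Cauchy–Schwarz in each row of `B` gives
`(B c)ᵀ K (B c) ≤ tr (Bᵀ K B) ‖c‖²`, and `‖c‖² = vᵀ K v`. So the residual of each block is at most
its squared distance times its share of the global norm, and these shares sum to at most `1`.
-/

lemma frobNorm_sq {m r : Type*} [Fintype m] [Fintype r] (M : Matrix m r ℝ) :
    frobNorm M ^ 2 = (Mᵀ * M).trace := by
  rw [frobNorm, Real.sq_sqrt (by positivity), trace, Finset.sum_comm]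
  simp only [diag_apply, mul_apply, transpose_apply, sq]

lemma dotProduct_mulVec_mulVec {m r : Type*} [Fintype m] [Fintype r] (G : Matrix m m ℝ)
    (T : Matrix m r ℝ) (c : r → ℝ) :
    (T *ᵥ c) ⬝ᵥ (G *ᵥ (T *ᵥ c)) = c ⬝ᵥ ((Tᵀ * G * T) *ᵥ c) := by
  rw [← mulVec_mulVec, ← mulVec_mulVec, dotProduct_mulVec c Tᵀ, vecMul_transpose]

lemma transpose_mul_mul_sub_proj {m r s : Type*} [Fintype m] [Fintype r] [DecidableEq r]
    (G : Matrix m m ℝ) (hG : Gᵀ = G) (T₁ : Matrix m r ℝ) (hT₁ : T₁ᵀ * G * T₁ = 1)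
    (T₂ : Matrix m s ℝ) :
    (T₂ - T₁ * (T₁ᵀ * G * T₂))ᵀ * G * (T₂ - T₁ * (T₁ᵀ * G * T₂)) =
      T₂ᵀ * G * T₂ - (T₁ᵀ * G * T₂)ᵀ * (T₁ᵀ * G * T₂) := by
  have hT₁' (X : Matrix r s ℝ) : T₁ᵀ * (G * (T₁ * X)) = X := by
    rw [← Matrix.mul_assoc, ← Matrix.mul_assoc, hT₁, Matrix.one_mul]
  simp only [transpose_sub, transpose_mul, transpose_transpose, hG, Matrix.sub_mul,
    Matrix.mul_sub, Matrix.mul_assoc, hT₁']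
  abel

section Weighted

variable {m r : Type*} [Fintype m] [Fintype r] [DecidableEq m] {κ : m → ℝ}

lemma dotProduct_diagonal_mulVec_self_nonneg (hκ : ∀ i, 0 ≤ κ i) (x : m → ℝ) :
    0 ≤ x ⬝ᵥ (diagonal κ *ᵥ x) := by
  simpa using (posSemidef_diagonal_iff.2 hκ).dotProduct_mulVec_nonneg x

lemma trace_transpose_mul_diagonal_mul (B : Matrix m r ℝ) :
    (Bᵀ * diagonal κ * B).trace = ∑ i, κ i * ∑ k, B i k ^ 2 := by
  simp only [trace, diag_apply, mul_apply, transpose_apply, diagonal_apply, mul_ite, mul_zero,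
    Finset.sum_ite_eq', Finset.mem_univ, if_true, Finset.mul_sum]
  rw [Finset.sum_comm]
  exact Finset.sum_congr rfl fun i _ => Finset.sum_congr rfl fun k _ => by ring

lemma mulVec_dotProduct_diagonal_mulVec_le (hκ : ∀ i, 0 ≤ κ i) (B : Matrix m r ℝ)
    (c : r → ℝ) :
    (B *ᵥ c) ⬝ᵥ (diagonal κ *ᵥ (B *ᵥ c)) ≤ (Bᵀ * diagonal κ * B).trace * (c ⬝ᵥ c) := by
  rw [trace_transpose_mul_diagonal_mul, Finset.sum_mul]
  simp only [dotProduct, mulVec_diagonal]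
  refine Finset.sum_le_sum fun i _ => ?_
  calc (B *ᵥ c) i * (κ i * (B *ᵥ c) i) = κ i * (∑ k, B i k * c k) ^ 2 := by
        rw [mulVec, dotProduct]; ring
    _ ≤ κ i * ((∑ k, B i k ^ 2) * ∑ k, c k ^ 2) :=
        mul_le_mul_of_nonneg_left (Finset.sum_mul_sq_le_sq_mul_sq _ _ _) (hκ i)
    _ = κ i * (∑ k, B i k ^ 2) * ∑ k, c k * c k := by simp only [sq]; ring

variable [DecidableEq r] {T₁ T₂ : Matrix m r ℝ}

lemma card_sub_frobNorm_sq_eq_trace (hT₁ : T₁ᵀ * diagonal κ * T₁ = 1)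
    (hT₂ : T₂ᵀ * diagonal κ * T₂ = 1) :
    (Fintype.card r : ℝ) - frobNorm (T₁ᵀ * diagonal κ * T₂) ^ 2 =
      trace ((T₂ - T₁ * (T₁ᵀ * diagonal κ * T₂))ᵀ * diagonal κ *
        (T₂ - T₁ * (T₁ᵀ * diagonal κ * T₂))) := by
  rw [transpose_mul_mul_sub_proj _ (diagonal_transpose κ) T₁ hT₁, hT₂, trace_sub, trace_one,
    frobNorm_sq]

lemma frobNorm_sq_le_card (hκ : ∀ i, 0 ≤ κ i) (hT₁ : T₁ᵀ * diagonal κ * T₁ = 1)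
    (hT₂ : T₂ᵀ * diagonal κ * T₂ = 1) :
    frobNorm (T₁ᵀ * diagonal κ * T₂) ^ 2 ≤ Fintype.card r := by
  rw [← sub_nonneg, card_sub_frobNorm_sq_eq_trace hT₁ hT₂, trace_transpose_mul_diagonal_mul]
  exact Finset.sum_nonneg fun i _ => mul_nonneg (hκ i) (by positivity)

lemma proj_residual_le (hκ : ∀ i, 0 ≤ κ i) (hT₁ : T₁ᵀ * diagonal κ * T₁ = 1)
    (hT₂ : T₂ᵀ * diagonal κ * T₂ = 1) {x : m → ℝ} (hx : x ∈ LinearMap.range T₂.mulVecLin) :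
    (x - T₁ *ᵥ (T₁ᵀ *ᵥ (diagonal κ *ᵥ x))) ⬝ᵥ
        (diagonal κ *ᵥ (x - T₁ *ᵥ (T₁ᵀ *ᵥ (diagonal κ *ᵥ x)))) ≤
      ((Fintype.card r : ℝ) - frobNorm (T₁ᵀ * diagonal κ * T₂) ^ 2) * (x ⬝ᵥ (diagonal κ *ᵥ x)) := by
  obtain ⟨c, rfl⟩ := hx
  have hres : T₂ *ᵥ c - T₁ *ᵥ (T₁ᵀ *ᵥ (diagonal κ *ᵥ (T₂ *ᵥ c))) =
      (T₂ - T₁ * (T₁ᵀ * diagonal κ * T₂)) *ᵥ c := by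
    simp only [sub_mulVec, mulVec_mulVec, Matrix.mul_assoc]
  rw [mulVecLin_apply, hres, card_sub_frobNorm_sq_eq_trace hT₁ hT₂,
    dotProduct_mulVec_mulVec _ T₂, hT₂, one_mulVec]
  exact mulVec_dotProduct_diagonal_mulVec_le hκ _ c

end Weighted

lemma sum_mul_le_iSup_of_sum_le_one {ι : Type*} [Fintype ι] {d q : ι → ℝ} (hd : ∀ j, 0 ≤ d j)
    (hq : ∀ j, 0 ≤ q j) (hq₁ : ∑ j, q j ≤ 1) : ∑ j, d j * q j ≤ ⨆ j, d j :=
  calc ∑ j, d j * q j ≤ ∑ j, (⨆ j, d j) * q j := Finset.sum_le_sum fun j _ =>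
        mul_le_mul_of_nonneg_right (le_ciSup (Set.finite_range d).bddAbove j) (hq j)
    _ = (⨆ j, d j) * ∑ j, q j := (Finset.mul_sum _ _ _).symm
    _ ≤ ⨆ j, d j := mul_le_of_le_one_right (Real.iSup_nonneg hd) hq₁

theorem blockwise_proj_residual_le_max_dist_sq_general (n m r : ℕ)
    (κ : Fin n → Fin m → ℝ) (hκ : ∀ j i, 0 < κ j i)
    (T₁ T₂ : Fin n → Matrix (Fin m) (Fin r) ℝ)
    (hT₁ : ∀ j, (T₁ j)ᵀ * Matrix.diagonal (κ j) * T₁ j = 1)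
    (hT₂ : ∀ j, (T₂ j)ᵀ * Matrix.diagonal (κ j) * T₂ j = 1)
    (v : Fin n → Fin m → ℝ)
    (hv : ∀ j, v j ∈ LinearMap.range (T₂ j).mulVecLin)
    (hvnorm : ∑ j, v j ⬝ᵥ (Matrix.diagonal (κ j) *ᵥ v j) ≤ 1)
    (w : Fin n → Fin m → ℝ)
    (hw : ∀ j, w j = T₁ j *ᵥ ((T₁ j)ᵀ *ᵥ (Matrix.diagonal (κ j) *ᵥ v j))) :
    ∑ j, (v j - w j) ⬝ᵥ (Matrix.diagonal (κ j) *ᵥ (v j - w j)) ≤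
      ⨆ j, ((r : ℝ) - (frobNorm ((T₁ j)ᵀ * Matrix.diagonal (κ j) * T₂ j)) ^ 2) := by
  have hκ₀ (j : Fin n) (i : Fin m) : 0 ≤ κ j i := (hκ j i).le
  calc ∑ j, (v j - w j) ⬝ᵥ (Matrix.diagonal (κ j) *ᵥ (v j - w j))
      ≤ ∑ j, ((r : ℝ) - (frobNorm ((T₁ j)ᵀ * Matrix.diagonal (κ j) * T₂ j)) ^ 2) *
          (v j ⬝ᵥ (Matrix.diagonal (κ j) *ᵥ v j)) := Finset.sum_le_sum fun j _ => by
        simpa only [hw j, Fintype.card_fin] using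
          proj_residual_le (hκ₀ j) (hT₁ j) (hT₂ j) (hv j)
    _ ≤ _ := sum_mul_le_iSup_of_sum_le_one
        (fun j => sub_nonneg.2 <| by
          simpa only [Fintype.card_fin] using frobNorm_sq_le_card (hκ₀ j) (hT₁ j) (hT₂ j))
        (fun j => dotProduct_diagonal_mulVec_self_nonneg (hκ₀ j) (v j)) hvnorm

/-- Blockwise subspace approximation bound. -/
theorem blockwise_proj_residual_le_max_dist_sq (n m r : ℕ)
    (hn : 0 < n) (hm : 0 < m) (hr : 0 < r)
    (κ : Fin n → Fin m → ℝ) (hκ : ∀ j i, 0 < κ j i)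
    (T₁ T₂ : Fin n → Matrix (Fin m) (Fin r) ℝ)
    (hT₁ : ∀ j, (T₁ j)ᵀ * Matrix.diagonal (κ j) * T₁ j = 1)
    (hT₂ : ∀ j, (T₂ j)ᵀ * Matrix.diagonal (κ j) * T₂ j = 1)
    (v : Fin n → Fin m → ℝ)
    (hv : ∀ j, v j ∈ LinearMap.range (T₂ j).mulVecLin)
    (hvnorm : ∑ j, v j ⬝ᵥ (Matrix.diagonal (κ j) *ᵥ v j) ≤ 1)
    (w : Fin n → Fin m → ℝ)
    (hw : ∀ j, w j = T₁ j *ᵥ ((T₁ j)ᵀ *ᵥ (Matrix.diagonal (κ j) *ᵥ v j))) :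
    ∑ j, (v j - w j) ⬝ᵥ (Matrix.diagonal (κ j) *ᵥ (v j - w j)) ≤
      ⨆ j, ((r : ℝ) - (frobNorm ((T₁ j)ᵀ * Matrix.diagonal (κ j) * T₂ j)) ^ 2) :=
  blockwise_proj_residual_le_max_dist_sq_general n m r κ hκ T₁ T₂ hT₁ hT₂ v hv hvnorm w hw
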